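/- arXiv:0902.2499 — 2 statements merged into one kernel-verified Lean document; each statement's English description precedes it below -/
import Mathlib

section
/- In the ω-twisted Z/2-graded category C* built from an additive symmetric monoidal category C and a symmetric object ω, the object ω^{1/2} := (0, 𝟙) satisfies: ω^{1/2} ⊗ ω^{1/2} is isomorphic to (ω, 0), and the braiding τ on ω^{1/2} ⊗ ω^{1/2} equals −id. -/
/-!
Tensoring with a zero object gives a zero object, so `0 ⊗ 0` and the odd part vanish, and the even
part is `(𝟙 ⊗ 𝟙) ⊗ ω ≅ ω`. The braiding of the unit with itself is the identity, so the sign of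
the twisted braiding turns it into `−𝟙` on the `(𝟙 ⊗ 𝟙) ⊗ ω` summand, while on the zero summand
`0 ⊗ 0` every endomorphism, in particular `β_{0,0}`, equals `−𝟙`.
-/

open CategoryTheory CategoryTheory.Limits MonoidalCategory ZeroObject

universe v u

namespace CategoryTheory.MonoidalCategory

section Preadditive

variable {C : Type u} [Category.{v} C] [Preadditive C] [MonoidalCategory C]
  [MonoidalPreadditive C]

lemma isZero_tensor_of_isZero_left {X : C} (hX : IsZero X) (Y : C) : IsZero (X ⊗ Y) :=
  (tensorRight Y).map_isZero hX

lemma isZero_tensor_of_isZero_right (X : C) {Y : C} (hY : IsZero Y) : IsZero (X ⊗ Y) :=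
  (tensorLeft X).map_isZero hY

end Preadditive

lemma braiding_tensorUnit_tensorUnit {C : Type u} [Category.{v} C] [MonoidalCategory C]
    [BraidedCategory C] : (β_ (𝟙_ C) (𝟙_ C)).hom = 𝟙 _ := by
  rw [braiding_tensorUnit_left, unitors_equal, Iso.hom_inv_id]

end CategoryTheory.MonoidalCategory

theorem stmt_6_general (C : Type u) [Category.{v} C] [Preadditive C] [HasZeroObject C]
    [HasBinaryBiproducts C] [MonoidalCategory C] [SymmetricCategory C]
    [MonoidalPreadditive C]
    (ω : C) :
    (Nonempty ((((0 : C) ⊗ (0 : C)) ⊞ ((𝟙_ C ⊗ 𝟙_ C) ⊗ ω)) ≅ ω) ∧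
      Nonempty ((((0 : C) ⊗ 𝟙_ C) ⊞ (𝟙_ C ⊗ (0 : C))) ≅ (0 : C))) ∧
    biprod.map (β_ (0 : C) (0 : C)).hom (-((β_ (𝟙_ C) (𝟙_ C)).hom ⊗ₘ 𝟙 ω)) =
      -(𝟙 ((((0 : C) ⊗ (0 : C)) ⊞ ((𝟙_ C ⊗ 𝟙_ C) ⊗ ω)))) := by
  have h00 : IsZero ((0 : C) ⊗ (0 : C)) := isZero_tensor_of_isZero_left (isZero_zero C) 0
  have hOdd : IsZero (((0 : C) ⊗ 𝟙_ C) ⊞ (𝟙_ C ⊗ (0 : C))) :=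
    (biprod_isZero_iff _ _).2 ⟨isZero_tensor_of_isZero_left (isZero_zero C) _,
      isZero_tensor_of_isZero_right _ (isZero_zero C)⟩
  refine ⟨⟨⟨(isoZeroBiprod h00).symm ≪≫ whiskerRightIso (λ_ (𝟙_ C)) ω ≪≫ λ_ ω⟩,
    ⟨hOdd.iso (isZero_zero C)⟩⟩, ?_⟩
  rw [braiding_tensorUnit_tensorUnit, id_tensorHom_id, h00.eq_of_src (β_ 0 0).hom (-𝟙 _)]
  ext <;> simp

/-- In the `ω`-twisted `ℤ/2`-graded category `C*` built from an additive
symmetric monoidal category `C` and a symmetric object `ω`, the object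
`ω^{1/2} := (0, 𝟙)` satisfies: `ω^{1/2} ⊗ ω^{1/2}`, whose components are
`(0 ⊗ 0) ⊞ ((𝟙 ⊗ 𝟙) ⊗ ω)` in even degree and `(0 ⊗ 𝟙) ⊞ (𝟙 ⊗ 0)` in odd
degree, is isomorphic to `(ω, 0)`; and the braiding of `C*` on
`ω^{1/2} ⊗ ω^{1/2}` — which on the even component is the biproduct map of
`β_{0,0}` and `−(β_{𝟙,𝟙} ⊗ 𝟙_ω)` — equals `−𝟙`. -/
theorem stmt_6 (C : Type u) [Category.{v} C] [Preadditive C] [HasZeroObject C]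
    [HasBinaryBiproducts C] [MonoidalCategory C] [SymmetricCategory C]
    [MonoidalPreadditive C]
    (ω : C) (hω : (β_ ω ω).hom = 𝟙 (ω ⊗ ω)) :
    (Nonempty ((((0 : C) ⊗ (0 : C)) ⊞ ((𝟙_ C ⊗ 𝟙_ C) ⊗ ω)) ≅ ω) ∧
      Nonempty ((((0 : C) ⊗ 𝟙_ C) ⊞ (𝟙_ C ⊗ (0 : C))) ≅ (0 : C))) ∧
    biprod.map (β_ (0 : C) (0 : C)).hom (-((β_ (𝟙_ C) (𝟙_ C)).hom ⊗ₘ 𝟙 ω)) =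
      -(𝟙 ((((0 : C) ⊗ (0 : C)) ⊞ ((𝟙_ C ⊗ 𝟙_ C) ⊗ ω)))) :=
  stmt_6_general C ω
end

section
/- Let A be a commutative ring finite as a module over a complete local Noetherian ring (R, m) via a ring map R → A, and suppose A ⊗_R (R/m) is a local ring. Then A is a local ring, with maximal ideal the kernel of the composite A → A ⊗_R (R/m) → residue field. -/
/-!
A finite algebra is integral, so every maximal ideal of `A` contracts to a maximal ideal of `R`,
which must be `m`; hence `mA` lies in the Jacobson radical of `A`. Reduction modulo an ideal
inside the Jacobson radical is a local homomorphism, so `A` is local because `A/mA` is, and its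
maximal ideal is the preimage of that of `A/mA`.
-/

open IsLocalRing

theorem IsLocalRing.map_maximalIdeal_le_jacobson_bot {R A : Type*} [CommRing R] [IsLocalRing R]
    [CommRing A] [Algebra R A] [Algebra.IsIntegral R A] :
    (maximalIdeal R).map (algebraMap R A) ≤ Ideal.jacobson ⊥ := by
  refine le_sInf fun n ⟨_, hn⟩ => ?_
  have : (n.comap (algebraMap R A)).IsMaximal := Ideal.isMaximal_comap_of_isIntegral_of_isMaximal n
  rw [Ideal.map_le_iff_le_comap, eq_maximalIdeal this]

theorem IsLocalRing.of_quotient_of_le_jacobson_bot {A : Type*} [CommRing A] (I : Ideal A)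
    [IsLocalRing (A ⧸ I)] (hI : I ≤ Ideal.jacobson ⊥) :
    ∃ hA : IsLocalRing A,
      @maximalIdeal A _ hA = (maximalIdeal (A ⧸ I)).comap (Ideal.Quotient.mk I) := by
  have := isLocalHom_of_le_jacobson_bot I hI
  have := (Ideal.Quotient.mk I).domain_isLocalRing
  exact ⟨this, (maximalIdeal_comap (Ideal.Quotient.mk I)).symm⟩

theorem stmt_19_general (R A : Type*) [CommRing R] [IsLocalRing R]
    [CommRing A] [Algebra R A] [Module.Finite R A]
    [hq : IsLocalRing (A ⧸ (IsLocalRing.maximalIdeal R).map (algebraMap R A))] :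
    ∃ hA : IsLocalRing A,
      @IsLocalRing.maximalIdeal A _ hA =
        RingHom.ker ((IsLocalRing.residue (A ⧸ (IsLocalRing.maximalIdeal R).map (algebraMap R A))).comp
          (Ideal.Quotient.mk ((IsLocalRing.maximalIdeal R).map (algebraMap R A)))) := by
  rw [← RingHom.comap_ker, ker_residue]
  exact of_quotient_of_le_jacobson_bot _ map_maximalIdeal_le_jacobson_bot

/-- Let `A` be a commutative algebra, finite as a module over a complete local
Noetherian ring `(R, m)`, such that `A ⊗_R R/m = A/mA` is a local ring.  Then
`A` is local, with maximal ideal the kernel of the composite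
`A → A/mA → residue field`. -/
theorem stmt_19 (R A : Type*) [CommRing R] [IsNoetherianRing R] [IsLocalRing R]
    [IsAdicComplete (IsLocalRing.maximalIdeal R) R]
    [CommRing A] [Algebra R A] [Module.Finite R A]
    [hq : IsLocalRing (A ⧸ (IsLocalRing.maximalIdeal R).map (algebraMap R A))] :
    ∃ hA : IsLocalRing A,
      @IsLocalRing.maximalIdeal A _ hA =
        RingHom.ker ((IsLocalRing.residue (A ⧸ (IsLocalRing.maximalIdeal R).map (algebraMap R A))).comp
          (Ideal.Quotient.mk ((IsLocalRing.maximalIdeal R).map (algebraMap R A)))) :=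
  stmt_19_general R A (hq := hq)
end
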